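/- arXiv:1608.07770 — 6 statements merged into one kernel-verified Lean document; each statement's English description precedes it below -/
import Mathlib

section
/- Let n ≥ 1, h > 0 and θ ∈ ℝ. Suppose φ : ℝ → ℝ is (n−1)-times continuously differentiable on the closed interval [θ, θ + n·h] and its (n−1)-st derivative is differentiable on the open interval (θ, θ + n·h). Then there exist points ξ_1, …, ξ_n with ξ_k ∈ (θ, θ + k·h) for each 1 ≤ k ≤ n such that ∑_{k=0}^{n} (−1)^k · C(n,k) · φ(θ + k·h) = (h^n / n!) · ∑_{k=1}^{n} (−1)^k · k^n · C(n,k) · φ^{(n)}(ξ_k). -/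
/-!
Expand `φ` by Taylor's formula with Lagrange remainder around `θ`, evaluated at each node
`θ + k h`, taking all derivatives within the whole interval `[θ, θ + n h]` so that the Taylor
coefficients do not depend on `k`. The Taylor parts then form a polynomial of degree `< n` in `k`,
which the `n`-th finite difference annihilates, and only the remainders
`(k h)ⁿ / n! · φ⁽ⁿ⁾(ξ_k)` survive; the node `k = 0` contributes no remainder since `0ⁿ = 0`.
-/

section AlternatingSum

open Finset fwdDiff

variable {R : Type*} [CommRing R]

theorem alternating_sum_range_choose_mul_sum_mul_pow_eq_zero (n : ℕ) (c : ℕ → R) :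
    ∑ k ∈ range (n + 1), (-1 : R) ^ k * (n.choose k : R) * ∑ j ∈ range n, c j * (k : R) ^ j =
      0 := by
  have hΔ := congr_fun (fwdDiff_iter_sum_mul_pow_eq_zero (R := R) (n := n) c) 0
  rw [fwdDiff_iter_eq_sum_shift, Pi.zero_apply] at hΔ
  calc _ = (-1) ^ n * ∑ k ∈ range (n + 1),
        ((-1 : ℤ) ^ (n - k) * n.choose k) • ∑ j ∈ range n, c j * (0 + k • (1 : R)) ^ j := by
        rw [mul_sum]
        refine sum_congr rfl fun k hk => ?_
        have hsign : (-1 : R) ^ n * (-1) ^ (n - k) = (-1) ^ k := by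
          rw [← pow_add, show n + (n - k) = k + 2 * (n - k) by grind, pow_add, pow_mul]
          simp
        rw [zsmul_eq_mul, zero_add, nsmul_one, ← hsign]
        push_cast
        ring
    _ = 0 := by rw [hΔ, mul_zero]

theorem alternating_sum_range_choose_mul_eq_of_eq_sum_mul_pow_add (n : ℕ) (f c r : ℕ → R)
    (hf : ∀ k ≤ n, f k = ∑ j ∈ range n, c j * (k : R) ^ j + (k : R) ^ n * r k) :
    ∑ k ∈ range (n + 1), (-1 : R) ^ k * (n.choose k : R) * f k =
      ∑ k ∈ range (n + 1), (-1 : R) ^ k * (k : R) ^ n * (n.choose k : R) * r k := by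
  calc _ = ∑ k ∈ range (n + 1), (-1 : R) ^ k * (n.choose k : R) * ∑ j ∈ range n, c j * (k : R) ^ j
        + ∑ k ∈ range (n + 1), (-1 : R) ^ k * (k : R) ^ n * (n.choose k : R) * r k := by
        rw [← sum_add_distrib]
        refine sum_congr rfl fun k hk => ?_
        rw [hf k (Nat.lt_succ_iff.mp (mem_range.mp hk))]
        ring
    _ = _ := by rw [alternating_sum_range_choose_mul_sum_mul_pow_eq_zero, zero_add]

theorem sum_range_add_one_eq_sum_Icc_one {M : Type*} [AddCommMonoid M] (n : ℕ) (g : ℕ → M)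
    (hg : g 0 = 0) : ∑ k ∈ range (n + 1), g k = ∑ k ∈ Icc 1 n, g k := by
  rw [Nat.range_succ_eq_Icc_zero, ← insert_Icc_add_one_left_eq_Icc (Nat.zero_le _),
    sum_insert (by simp), hg, zero_add, zero_add]

end AlternatingSum

theorem iteratedDerivWithin_inter {𝕜 F : Type*} [NontriviallyNormedField 𝕜] [NormedAddCommGroup F]
    [NormedSpace 𝕜 F] {f : 𝕜 → F} {s u : Set 𝕜} {x : 𝕜} (hu : u ∈ nhds x) (n : ℕ) :
    iteratedDerivWithin n f (s ∩ u) x = iteratedDerivWithin n f s x := by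
  simp only [iteratedDerivWithin_eq_iteratedFDerivWithin, iteratedFDerivWithin_inter hu]

open Set

theorem iteratedDerivWithin_Icc_eq_of_lt_of_le {F : Type*} [NormedAddCommGroup F] [NormedSpace ℝ F]
    (f : ℝ → F) (n : ℕ) {a b c x : ℝ} (hxc : x < c) (hcb : c ≤ b) :
    iteratedDerivWithin n f (Icc a c) x = iteratedDerivWithin n f (Icc a b) x := by
  have hIcc : Icc a c = Icc a b ∩ Iic c := by
    ext y; simp only [mem_Icc, mem_inter_iff, mem_Iic]; grind
  rw [hIcc, iteratedDerivWithin_inter (Iic_mem_nhds hxc)]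

theorem taylor_mean_remainder_lagrange_Icc_of_le {f : ℝ → ℝ} {a b x : ℝ} {n : ℕ}
    (hax : a < x) (hxb : x ≤ b) (hf : ContDiffOn ℝ n f (Icc a b))
    (hf' : DifferentiableOn ℝ (iteratedDerivWithin n f (Icc a b)) (Ioo a b)) :
    ∃ ξ ∈ Ioo a x, f x = taylorWithinEval f n (Icc a b) a x +
      iteratedDerivWithin (n + 1) f (Icc a b) ξ * (x - a) ^ (n + 1) / (n + 1).factorial := by
  have hderiv : ∀ m, ∀ y < x, iteratedDerivWithin m f (Icc a x) y =
      iteratedDerivWithin m f (Icc a b) y :=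
    fun m y hy => iteratedDerivWithin_Icc_eq_of_lt_of_le f m hy hxb
  obtain ⟨ξ, hξ, hrem⟩ := taylor_mean_remainder_lagrange (x₀ := a) hax.ne
    (by rw [uIcc_of_le hax.le]; exact hf.mono (Icc_subset_Icc_right hxb))
    (by
      rw [uIcc_of_le hax.le, uIoo_of_le hax.le]
      exact (hf'.mono (Ioo_subset_Ioo_right hxb)).congr fun y hy => hderiv n y hy.2)
  rw [uIoo_of_le hax.le] at hξ
  rw [uIcc_of_le hax.le, taylor_within_apply, hderiv _ ξ hξ.2] at hrem
  simp only [hderiv _ a hax] at hrem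
  refine ⟨ξ, hξ, ?_⟩
  rw [taylor_within_apply, ← hrem]
  ring

theorem taylor_mean_remainder_lagrange_Icc_node {φ : ℝ → ℝ} {θ h b : ℝ} {m k : ℕ} (hh : 0 < h)
    (hk : 1 ≤ k) (hkb : θ + k * h ≤ b) (hC : ContDiffOn ℝ m φ (Icc θ b))
    (hD : DifferentiableOn ℝ (iteratedDerivWithin m φ (Icc θ b)) (Ioo θ b)) :
    ∃ ξ ∈ Ioo θ (θ + k * h), φ (θ + k * h) =
      ∑ j ∈ Finset.range (m + 1),
          (j.factorial : ℝ)⁻¹ * h ^ j * iteratedDerivWithin j φ (Icc θ b) θ * (k : ℝ) ^ j +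
        (k : ℝ) ^ (m + 1) *
          (h ^ (m + 1) / (m + 1).factorial * iteratedDerivWithin (m + 1) φ (Icc θ b) ξ) := by
  have hk' : (1 : ℝ) ≤ k := by exact_mod_cast hk
  obtain ⟨ξ, hξ, hφ⟩ :=
    taylor_mean_remainder_lagrange_Icc_of_le (x := θ + k * h) (by nlinarith) hkb hC hD
  refine ⟨ξ, hξ, ?_⟩
  rw [hφ, taylor_within_apply, add_sub_cancel_left]
  congr 1
  · exact Finset.sum_congr rfl fun j _ => by rw [smul_eq_mul]; ring
  · ring

open Set in
/-- the n-th forward finite difference of `φ` at `θ` with step `h`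
equals `(h^n/n!) ∑_{k=1}^n (-1)^k k^n C(n,k) φ⁽ⁿ⁾(ξ_k)` for some
`ξ_k ∈ (θ, θ + k h)`. -/
theorem blend_finite_difference_lagrange_form
    (n : ℕ) (hn : 1 ≤ n) (h : ℝ) (hh : 0 < h) (θ : ℝ) (φ : ℝ → ℝ)
    (hC : ContDiffOn ℝ (n - 1 : ℕ) φ (Icc θ (θ + n * h)))
    (hD : DifferentiableOn ℝ
      (iteratedDerivWithin (n - 1) φ (Icc θ (θ + n * h))) (Ioo θ (θ + n * h))) :
    ∃ ξ : ℕ → ℝ, (∀ k, 1 ≤ k → k ≤ n → ξ k ∈ Ioo θ (θ + k * h)) ∧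
      ∑ k ∈ Finset.range (n + 1),
          (-1 : ℝ) ^ k * (n.choose k : ℝ) * φ (θ + k * h) =
        (h ^ n / (n.factorial : ℝ)) *
          ∑ k ∈ Finset.Icc 1 n,
            (-1 : ℝ) ^ k * (k : ℝ) ^ n * (n.choose k : ℝ) *
              iteratedDerivWithin n φ (Icc θ (θ + n * h)) (ξ k) := by
  obtain ⟨m, rfl⟩ : ∃ m, n = m + 1 := ⟨n - 1, by omega⟩
  rw [Nat.add_sub_cancel] at hC hD
  set s := Icc θ (θ + ((m + 1 : ℕ) : ℝ) * h)
  have hnode := fun k (hk : k ∈ Finset.Icc 1 (m + 1)) =>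
    taylor_mean_remainder_lagrange_Icc_node hh (Finset.mem_Icc.1 hk).1
      (by gcongr; exact_mod_cast (Finset.mem_Icc.1 hk).2) hC hD
  choose! ξ hξ hφ using hnode
  refine ⟨ξ, fun k hk1 hk2 => hξ k (Finset.mem_Icc.2 ⟨hk1, hk2⟩), ?_⟩
  rw [alternating_sum_range_choose_mul_eq_of_eq_sum_mul_pow_add (m + 1) _
      (fun j => (j.factorial : ℝ)⁻¹ * h ^ j * iteratedDerivWithin j φ s θ)
      (fun k => h ^ (m + 1) / (m + 1).factorial * iteratedDerivWithin (m + 1) φ s (ξ k)),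
    sum_range_add_one_eq_sum_Icc_one _ _ (by simp), Finset.mul_sum]
  · exact Finset.sum_congr rfl fun k _ => by ring
  · intro k hk
    rcases k.eq_zero_or_pos with rfl | hk0
    · simp [Finset.sum_range_succ']
    · exact hφ k (Finset.mem_Icc.2 ⟨hk0, hk⟩)
end

section
/- Let n ≥ 1, h > 0, M ≥ 0, b > 0 and θ ∈ ℝ. Suppose φ : ℝ → ℝ is (n−1)-times continuously differentiable on [θ, θ + n·h] with its (n−1)-st derivative differentiable on (θ, θ + n·h), and |φ^{(n)}(ξ)| ≤ M · b^n for all ξ ∈ (θ, θ + n·h). Then |∑_{k=0}^{n} (−1)^k · C(n,k) · φ(θ + k·h)| ≤ M · b^n · (h^n / n!) · ∑_{k=1}^{n} k^n · C(n,k) ≤ M · b^n · (2·n·h)^n / n!. -/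
/-!
Subtract from `φ` its Taylor polynomial `T` of degree `n - 1` at `θ`, taken within
`[θ, θ + n h]`. The alternating binomial sum is `(-1)^n` times the `n`-th forward difference,
which annihilates polynomials of degree `< n`, so only the remainders
`φ (θ + k h) - T (θ + k h)` contribute; by Lagrange's form each is at most
`M b^n (k h)^n / n!`. The second inequality is `k^n ≤ n^n` together with `∑ C(n,k) = 2^n`.
-/

open Set Finset

theorem sum_neg_one_pow_mul_choose_mul_sum_mul_pow_eq_zero {R : Type*} [CommRing R]
    (n : ℕ) (c : ℕ → R) :
    ∑ k ∈ range (n + 1), (-1) ^ k * n.choose k * ∑ j ∈ range n, c j * (k : R) ^ j = 0 := by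
  have hΔ := congr_fun (fwdDiff_iter_sum_mul_pow_eq_zero (n := n) c) 0
  simp only [fwdDiff_iter_eq_sum_shift, zero_add, nsmul_one, Pi.zero_apply, zsmul_eq_mul] at hΔ
  push_cast at hΔ
  -- `(-1) ^ k = (-1) ^ n * (-1) ^ (n - k)` turns the sum into `(-1) ^ n` times `Δ^[n]` at `0`.
  calc _ = (-1) ^ n * ∑ k ∈ range (n + 1),
        (-1) ^ (n - k) * n.choose k * ∑ j ∈ range n, c j * (k : R) ^ j := by
        rw [mul_sum]
        refine sum_congr rfl fun k hk => ?_
        have hkn : n + (n - k) = k + 2 * (n - k) := by grind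
        rw [← mul_assoc, ← mul_assoc, ← pow_add, hkn, pow_add, pow_mul, neg_one_sq, one_pow,
          mul_one]
    _ = 0 := by rw [hΔ, mul_zero]

theorem iteratedDerivWithin_Icc_eq_of_le {f : ℝ → ℝ} {a x c y : ℝ} (hxc : x ≤ c)
    (hy : y ∈ Ico a x) (j : ℕ) :
    iteratedDerivWithin j f (Icc a x) y = iteratedDerivWithin j f (Icc a c) y := by
  have hloc : Icc a x =ᶠ[nhds y] Icc a c := by
    filter_upwards [Iio_mem_nhds hy.2] with z hz
    exact propext ⟨fun hz' => ⟨hz'.1, hz'.2.trans hxc⟩, fun hz' => ⟨hz'.1, hz.le⟩⟩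
  simp only [iteratedDerivWithin_eq_iteratedFDerivWithin, iteratedFDerivWithin_congr_set hloc]

theorem abs_sub_taylorWithinEval_Icc_le {f : ℝ → ℝ} {a c x K : ℝ} {m : ℕ}
    (hx : x ∈ Icc a c) (hf : ContDiffOn ℝ m f (Icc a c))
    (hf' : DifferentiableOn ℝ (iteratedDerivWithin m f (Icc a c)) (Ioo a c))
    (hK : ∀ ξ ∈ Ioo a c, |iteratedDerivWithin (m + 1) f (Icc a c) ξ| ≤ K) :
    |f x - taylorWithinEval f m (Icc a c) a x| ≤ K * (x - a) ^ (m + 1) / (m + 1).factorial := by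
  rcases hx.1.eq_or_lt with rfl | hax
  · simp [taylorWithinEval_self]
  have hderiv : ∀ j, ∀ y ∈ Ico a x,
      iteratedDerivWithin j f (Icc a x) y = iteratedDerivWithin j f (Icc a c) y :=
    fun j y hy => iteratedDerivWithin_Icc_eq_of_le hx.2 hy j
  have htaylor : taylorWithinEval f m (Icc a x) a x = taylorWithinEval f m (Icc a c) a x := by
    simp only [taylor_within_apply, hderiv _ a ⟨le_rfl, hax⟩]
  have hf'x : DifferentiableOn ℝ (iteratedDerivWithin m f (Icc a x)) (Ioo a x) :=
    fun y hy => ((hf' y ⟨hy.1, hy.2.trans_le hx.2⟩).mono (Ioo_subset_Ioo_right hx.2)).congr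
      (fun z hz => hderiv m z ⟨hz.1.le, hz.2⟩) (hderiv m y ⟨hy.1.le, hy.2⟩)
  obtain ⟨ξ, hξ, hrem⟩ := taylor_mean_remainder_lagrange (f := f) (n := m) hax.ne
    (by rw [uIcc_of_le hax.le]; exact hf.mono (Icc_subset_Icc_right hx.2))
    (by rwa [uIcc_of_le hax.le, uIoo_of_le hax.le])
  rw [uIoo_of_le hax.le] at hξ
  rw [uIcc_of_le hax.le, htaylor, hderiv _ ξ ⟨hξ.1.le, hξ.2⟩] at hrem
  rw [hrem, abs_div, abs_mul, abs_of_nonneg (pow_nonneg (sub_nonneg.2 hax.le) _), Nat.abs_cast]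
  gcongr
  exact hK ξ ⟨hξ.1, hξ.2.trans_le hx.2⟩

theorem sum_neg_one_pow_mul_choose_mul_taylorWithinEval_eq_zero (f : ℝ → ℝ) (m : ℕ)
    (s : Set ℝ) (a h : ℝ) :
    ∑ k ∈ range (m + 2), (-1) ^ k * ((m + 1).choose k : ℝ) *
      taylorWithinEval f m s a (a + k * h) = 0 := by
  rw [← sum_neg_one_pow_mul_choose_mul_sum_mul_pow_eq_zero (m + 1)
    (fun j => h ^ j / j.factorial * iteratedDerivWithin j f s a)]
  refine sum_congr rfl fun k _ => ?_
  simp only [taylor_within_apply, add_sub_cancel_left, smul_eq_mul]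
  congr 1
  exact sum_congr rfl fun j _ => by ring

theorem abs_sum_neg_one_pow_mul_choose_mul_le {n : ℕ} {g B : ℕ → ℝ}
    (hg : ∀ k ∈ range (n + 1), |g k| ≤ B k) :
    |∑ k ∈ range (n + 1), (-1) ^ k * (n.choose k : ℝ) * g k| ≤
      ∑ k ∈ range (n + 1), (n.choose k : ℝ) * B k := by
  refine (abs_sum_le_sum_abs _ _).trans (sum_le_sum fun k hk => ?_)
  rw [abs_mul, abs_mul, abs_pow, abs_neg, abs_one, one_pow, one_mul, Nat.abs_cast]
  exact mul_le_mul_of_nonneg_left (hg k hk) (Nat.cast_nonneg _)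

theorem sum_Icc_pow_mul_choose_le (n : ℕ) :
    ∑ k ∈ Icc 1 n, (k : ℝ) ^ n * (n.choose k : ℝ) ≤ (2 * n) ^ n := by
  calc ∑ k ∈ Icc 1 n, (k : ℝ) ^ n * (n.choose k : ℝ)
      ≤ ∑ k ∈ Icc 0 n, (n : ℝ) ^ n * (n.choose k : ℝ) := by
        refine (sum_le_sum fun k hk => ?_).trans <| sum_le_sum_of_subset_of_nonneg
          (Icc_subset_Icc_left zero_le_one) fun _ _ _ => by positivity
        gcongr
        exact (mem_Icc.1 hk).2
    _ = (2 * n) ^ n := by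
        rw [← mul_sum, ← Nat.range_succ_eq_Icc_zero, ← Nat.cast_sum, Nat.sum_range_choose,
          mul_pow, mul_comm]
        push_cast; ring

theorem sum_range_choose_mul_pow_eq_sum_Icc {n : ℕ} (hn : n ≠ 0) (K h : ℝ) :
    ∑ k ∈ range (n + 1), (n.choose k : ℝ) * (K * (k * h) ^ n / n.factorial) =
      K * (h ^ n / n.factorial) * ∑ k ∈ Icc 1 n, (k : ℝ) ^ n * (n.choose k : ℝ) := by
  rw [Nat.range_succ_eq_Icc_zero, ← Finset.insert_Icc_add_one_left_eq_Icc (Nat.zero_le _),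
    sum_insert (by simp), mul_sum]
  simp only [Nat.cast_zero, zero_mul, zero_pow hn, mul_zero, zero_div, zero_add]
  exact sum_congr rfl fun k _ => by ring

open Set in
theorem blend_finite_difference_bound_chain_general
    (n : ℕ) (hn : 1 ≤ n) (h : ℝ) (hh : 0 < h) (M b : ℝ)
    (θ : ℝ) (φ : ℝ → ℝ)
    (hC : ContDiffOn ℝ (n - 1 : ℕ) φ (Icc θ (θ + n * h)))
    (hD : DifferentiableOn ℝ
      (iteratedDerivWithin (n - 1) φ (Icc θ (θ + n * h))) (Ioo θ (θ + n * h)))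
    (hbound : ∀ ξ ∈ Ioo θ (θ + n * h),
      |iteratedDerivWithin n φ (Icc θ (θ + n * h)) ξ| ≤ M * b ^ n) :
    |∑ k ∈ Finset.range (n + 1),
        (-1 : ℝ) ^ k * (n.choose k : ℝ) * φ (θ + k * h)| ≤
      M * b ^ n * (h ^ n / (n.factorial : ℝ)) *
        ∑ k ∈ Finset.Icc 1 n, (k : ℝ) ^ n * (n.choose k : ℝ) ∧
    M * b ^ n * (h ^ n / (n.factorial : ℝ)) *
        ∑ k ∈ Finset.Icc 1 n, (k : ℝ) ^ n * (n.choose k : ℝ) ≤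
      M * b ^ n * (2 * n * h) ^ n / (n.factorial : ℝ) := by
  obtain ⟨m, rfl⟩ : ∃ m, n = m + 1 := Nat.exists_eq_add_of_le' hn
  simp only [Nat.add_sub_cancel] at hC hD
  set T := taylorWithinEval φ m (Icc θ (θ + (m + 1 : ℕ) * h)) θ
  have hremainder : ∀ k ∈ range (m + 2), |φ (θ + k * h) - T (θ + k * h)| ≤
      M * b ^ (m + 1) * (k * h) ^ (m + 1) / (m + 1).factorial := by
    intro k hk
    have hkn : (k : ℝ) * h ≤ (m + 1 : ℕ) * h := by gcongr; exact mem_range_succ_iff.1 hk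
    simpa only [add_sub_cancel_left] using abs_sub_taylorWithinEval_Icc_le
      (x := θ + k * h) ⟨le_add_of_nonneg_right (by positivity), add_le_add_right hkn θ⟩
      hC hD hbound
  have hK : 0 ≤ M * b ^ (m + 1) := (abs_nonneg _).trans <| hbound (θ + h / 2)
    ⟨by linarith, by push_cast; nlinarith⟩
  have hcancel :
      ∑ k ∈ range (m + 2), (-1 : ℝ) ^ k * ((m + 1).choose k : ℝ) * φ (θ + k * h) =
      ∑ k ∈ range (m + 2),
        (-1) ^ k * ((m + 1).choose k : ℝ) * (φ (θ + k * h) - T (θ + k * h)) := by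
    simp only [mul_sub, sum_sub_distrib, T,
      sum_neg_one_pow_mul_choose_mul_taylorWithinEval_eq_zero, sub_zero]
  refine ⟨?_, ?_⟩
  · rw [hcancel, ← sum_range_choose_mul_pow_eq_sum_Icc m.succ_ne_zero]
    exact abs_sum_neg_one_pow_mul_choose_mul_le hremainder
  · calc _ ≤ M * b ^ (m + 1) * (h ^ (m + 1) / (m + 1).factorial) *
          (2 * (m + 1 : ℕ)) ^ (m + 1) := by
          gcongr
          exact sum_Icc_pow_mul_choose_le _
      _ = _ := by ring

open Set in
/-- eq. (9), first chain of inequalities: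
`|(𝒥 - 𝒯_h)^n φ(θ)| ≤ M b^n (h^n/n!) ∑_{k=1}^n k^n C(n,k) ≤ M b^n (2nh)^n / n!`. -/
theorem blend_finite_difference_bound_chain
    (n : ℕ) (hn : 1 ≤ n) (h : ℝ) (hh : 0 < h) (M b : ℝ) (hM : 0 ≤ M) (hb : 0 < b)
    (θ : ℝ) (φ : ℝ → ℝ)
    (hC : ContDiffOn ℝ (n - 1 : ℕ) φ (Icc θ (θ + n * h)))
    (hD : DifferentiableOn ℝ
      (iteratedDerivWithin (n - 1) φ (Icc θ (θ + n * h))) (Ioo θ (θ + n * h)))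
    (hbound : ∀ ξ ∈ Ioo θ (θ + n * h),
      |iteratedDerivWithin n φ (Icc θ (θ + n * h)) ξ| ≤ M * b ^ n) :
    |∑ k ∈ Finset.range (n + 1),
        (-1 : ℝ) ^ k * (n.choose k : ℝ) * φ (θ + k * h)| ≤
      M * b ^ n * (h ^ n / (n.factorial : ℝ)) *
        ∑ k ∈ Finset.Icc 1 n, (k : ℝ) ^ n * (n.choose k : ℝ) ∧
    M * b ^ n * (h ^ n / (n.factorial : ℝ)) *
        ∑ k ∈ Finset.Icc 1 n, (k : ℝ) ^ n * (n.choose k : ℝ) ≤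
      M * b ^ n * (2 * n * h) ^ n / (n.factorial : ℝ) :=
  blend_finite_difference_bound_chain_general n hn h hh M b θ φ hC hD hbound
end

section
/- Let h > 0, M ≥ 0, b > 0 and θ ∈ ℝ with 2·h·b·e < 1. Suppose φ : ℝ → ℝ is infinitely differentiable on [θ, ∞) and for every n ≥ 1, |φ^{(n)}(ξ)| ≤ M · b^n for all ξ ∈ [θ, θ + n·h]. Then the series ∑_{n=1}^{∞} (1/n) · |∑_{k=0}^{n} (−1)^k · C(n,k) · φ(θ + k·h)| converges; in particular the logarithmic series −(1/h) ∑_{n=1}^{∞} (1/n) ∑_{k=0}^{n} (−1)^k · C(n,k) · φ(θ + k·h) converges absolutely. -/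
open Set Real

lemma alt_step (n : ℕ) (f : ℕ → ℝ) :
    ∑ k ∈ Finset.range (n+2), (-1:ℝ)^k * ((n+1).choose k) * f k
    = ∑ k ∈ Finset.range (n+1), (-1:ℝ)^k * (n.choose k) * (f k - f (k+1)) := by
  have hA : ∑ k ∈ Finset.range (n+2), (-1:ℝ)^k * (n.choose k) * f k
      = ∑ k ∈ Finset.range (n+1), (-1:ℝ)^k * (n.choose k) * f k := by
    rw [Finset.sum_range_succ, Nat.choose_succ_self]; simp
  rw [Finset.sum_range_succ'] at hA
  rw [Finset.sum_range_succ']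
  simp only [Nat.choose_succ_succ, Nat.cast_add, Nat.choose_zero_right, Nat.cast_one, pow_zero,
    one_mul] at hA ⊢
  have expand : ∀ k ∈ Finset.range (n+1),
      (-1:ℝ)^(k+1) * ((n.choose k : ℝ) + (n.choose (k+1) : ℝ)) * f (k+1)
      = ((-1:ℝ)^k * (n.choose k) * (f k - f (k+1)) - (-1:ℝ)^k * (n.choose k) * f k)
        + (-1:ℝ)^(k+1) * (n.choose (k+1) : ℝ) * f (k+1) := by
    intro k _; ring
  rw [Finset.sum_congr rfl expand, Finset.sum_add_distrib, Finset.sum_sub_distrib]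
  linarith [hA]

lemma alt_sum_pow (n : ℕ) : ∀ j : ℕ, j < n →
    ∑ k ∈ Finset.range (n+1), (-1:ℝ)^k * (n.choose k : ℝ) * (k:ℝ)^j = 0 := by
  induction n with
  | zero => intro j hj; omega
  | succ n ih =>
    intro j hj
    rw [show n+1+1 = n+2 from rfl, alt_step n (fun k => (k:ℝ)^j)]
    have expand : ∀ k : ℕ, ((k:ℝ)^j - ((k+1:ℕ):ℝ)^j)
        = -∑ i ∈ Finset.range j, (k:ℝ)^i * (j.choose i : ℝ) := by
      intro k
      have h1 : ((k:ℝ) + 1)^j = ∑ i ∈ Finset.range (j+1), (k:ℝ)^i * 1^(j-i) * (j.choose i) :=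
        add_pow (k:ℝ) 1 j
      rw [Finset.sum_range_succ] at h1
      push_cast
      simp only [one_pow, mul_one, Nat.choose_self, Nat.cast_one] at h1
      rw [h1]
      ring
    calc ∑ k ∈ Finset.range (n+1), (-1:ℝ)^k * (n.choose k : ℝ) * ((k:ℝ)^j - ((k+1:ℕ):ℝ)^j)
        = ∑ k ∈ Finset.range (n+1), ∑ i ∈ Finset.range j,
            (-(j.choose i : ℝ)) * ((-1:ℝ)^k * (n.choose k : ℝ) * (k:ℝ)^i) := by
          refine Finset.sum_congr rfl fun k _ => ?_
          rw [expand k, mul_neg, Finset.mul_sum, ← Finset.sum_neg_distrib]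
          exact Finset.sum_congr rfl fun i _ => by ring
      _ = ∑ i ∈ Finset.range j, (-(j.choose i : ℝ)) *
            ∑ k ∈ Finset.range (n+1), (-1:ℝ)^k * (n.choose k : ℝ) * (k:ℝ)^i := by
          rw [Finset.sum_comm]
          exact Finset.sum_congr rfl fun i _ => by rw [Finset.mul_sum]
      _ = 0 := by
          refine Finset.sum_eq_zero fun i hi => ?_
          rw [ih i (by exact lt_of_lt_of_le (Finset.mem_range.mp hi) (by omega)), mul_zero]

lemma iterDW_congr_set {f : ℝ → ℝ} {s t : Set ℝ} {x : ℝ} (hst : s =ᶠ[nhds x] t) (n : ℕ) :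
    iteratedDerivWithin n f s x = iteratedDerivWithin n f t x := by
  simp only [iteratedDerivWithin, iteratedFDerivWithin_congr_set hst]

lemma icc_ev_left {a c : ℝ} (hac : a < c) : Icc a c =ᶠ[nhds a] Ici a := by
  rw [Filter.eventuallyEq_set]
  filter_upwards [Iio_mem_nhds hac] with y hy
  have : y < c := hy
  simp only [Set.mem_Icc, Set.mem_Ici]
  exact ⟨fun h => h.1, fun h => ⟨h, this.le⟩⟩

lemma icc_ev_mid {a c x : ℝ} (hx : x ∈ Ioo a c) : Icc a c =ᶠ[nhds x] Ici a := by
  rw [Filter.eventuallyEq_set]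
  filter_upwards [Ioo_mem_nhds hx.1 hx.2] with y hy
  simp [Set.mem_Icc, Set.mem_Ici, hy.1.le, hy.2.le]

lemma taylor_claim (h : ℝ) (hh : 0 < h) (M b : ℝ) (hM : 0 ≤ M) (hb : 0 < b) (θ : ℝ)
    (φ : ℝ → ℝ) (hC : ContDiffOn ℝ (⊤ : ℕ∞) φ (Ici θ))
    (hbound : ∀ n : ℕ, 1 ≤ n → ∀ ξ ∈ Icc θ (θ + n * h),
      |iteratedDerivWithin n φ (Ici θ) ξ| ≤ M * b ^ n)
    (n : ℕ) (hn : 1 ≤ n) (k : ℕ) (hk : k ≤ n) :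
    |φ (θ + k * h) - ∑ j ∈ Finset.range n,
        ((k : ℝ) * h) ^ j / j.factorial * iteratedDerivWithin j φ (Ici θ) θ|
      ≤ M * b ^ n * ((n : ℝ) * h) ^ n / n.factorial := by
  have hB : 0 ≤ M * b ^ n * ((n : ℝ) * h) ^ n / n.factorial := by positivity
  rcases Nat.eq_zero_or_pos k with rfl | hk1
  · obtain ⟨m, rfl⟩ : ∃ m, n = m + 1 := ⟨n - 1, by omega⟩
    have : ∑ j ∈ Finset.range (m+1),
        ((0 : ℝ) * h) ^ j / j.factorial * iteratedDerivWithin j φ (Ici θ) θ = φ θ := by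
      rw [Finset.sum_eq_single_of_mem 0 (Finset.mem_range.mpr (by omega))]
      · simp
      · intro j _ hj
        simp [zero_pow hj]
    simp only [Nat.cast_zero, this]
    simpa using hB
  · set c : ℝ := θ + k * h with hc
    have hθc : θ < c := by
      have : (0:ℝ) < k * h := by positivity
      linarith
    obtain ⟨m, rfl⟩ : ∃ m, n = m + 1 := ⟨n - 1, by omega⟩
    have hf : ContDiffOn ℝ m φ (Icc θ c) := (hC.mono Icc_subset_Ici_self).of_le (by exact_mod_cast le_top)
    have hf' : DifferentiableOn ℝ (iteratedDerivWithin m φ (Icc θ c)) (Ioo θ c) := by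
      refine (ContDiffOn.differentiableOn_iteratedDerivWithin
        (hC.mono Icc_subset_Ici_self) ?_ (uniqueDiffOn_Icc hθc)).mono Ioo_subset_Icc_self
      exact_mod_cast ENat.coe_lt_top m
    obtain ⟨x', hx', hTay⟩ : ∃ x' ∈ Ioo θ c, φ c - taylorWithinEval φ m (Icc θ c) θ c =
        iteratedDerivWithin (m + 1) φ (Icc θ c) x' * (c - θ) ^ (m + 1) / (m + 1).factorial := by
      have := taylor_mean_remainder_lagrange (x := c) (x₀ := θ) (n := m) hθc.ne
        (by rwa [uIcc_of_le hθc.le]) (by rwa [uIcc_of_le hθc.le, uIoo_of_le hθc.le])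
      rwa [uIcc_of_le hθc.le, uIoo_of_le hθc.le] at this
    have hP : taylorWithinEval φ m (Icc θ c) θ c = ∑ j ∈ Finset.range (m+1),
        ((k : ℝ) * h) ^ j / j.factorial * iteratedDerivWithin j φ (Ici θ) θ := by
      rw [taylor_within_apply]
      refine Finset.sum_congr rfl fun j _ => ?_
      rw [iterDW_congr_set (icc_ev_left hθc) j]
      have : c - θ = (k : ℝ) * h := by rw [hc]; ring
      rw [this, smul_eq_mul]
      ring
    rw [hP] at hTay
    rw [show φ (θ + ↑k * h) = φ c from rfl, hTay]
    have hmem : x' ∈ Icc θ (θ + (m+1 : ℕ) * h) := by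
      refine ⟨hx'.1.le, ?_⟩
      have h1 : x' < c := hx'.2
      have h2 : (k : ℝ) * h ≤ ((m+1 : ℕ) : ℝ) * h := by
        have : (k : ℝ) ≤ ((m+1 : ℕ) : ℝ) := by exact_mod_cast hk
        nlinarith
      rw [hc] at h1; linarith
    have hd := hbound (m+1) (by omega) x' hmem
    have hd2 : |iteratedDerivWithin (m+1) φ (Icc θ c) x'| ≤ M * b ^ (m+1) := by
      rwa [iterDW_congr_set (icc_ev_mid hx') (m+1)]
    have hcθ : c - θ = (k : ℝ) * h := by rw [hc]; ring
    rw [abs_div, abs_mul, hcθ, Nat.abs_cast]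
    have hkh : (0:ℝ) ≤ (k:ℝ) * h := by positivity
    have hkn : ((k:ℝ) * h) ^ (m+1) ≤ (((m+1:ℕ):ℝ) * h) ^ (m+1) := by
      apply pow_le_pow_left₀ hkh
      have : (k : ℝ) ≤ ((m+1 : ℕ) : ℝ) := by exact_mod_cast hk
      nlinarith
    rw [abs_pow, abs_of_nonneg hkh]
    gcongr



open Set Real in
/-- under conditions (C1)-(C2) for all `n` and `2 h b e < 1`, the
logarithmic series `-(1/h) ∑_{n≥1} (1/n) (𝒥 - 𝒯_h)^n φ(θ)` converges
absolutely.  (The `n = 0` term is `0` since `1/0 = 0` in `ℝ`.) -/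
theorem blend_log_series_absolutely_convergent
    (h : ℝ) (hh : 0 < h) (M b : ℝ) (hM : 0 ≤ M) (hb : 0 < b) (θ : ℝ)
    (hsmall : 2 * h * b * exp 1 < 1) (φ : ℝ → ℝ)
    (hC : ContDiffOn ℝ (⊤ : ℕ∞) φ (Ici θ))
    (hbound : ∀ n : ℕ, 1 ≤ n → ∀ ξ ∈ Icc θ (θ + n * h),
      |iteratedDerivWithin n φ (Ici θ) ξ| ≤ M * b ^ n) :
    Summable (fun n : ℕ =>
      (1 / n : ℝ) * |∑ k ∈ Finset.range (n + 1),
        (-1 : ℝ) ^ k * (n.choose k : ℝ) * φ (θ + k * h)|) ∧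
    Summable (fun n : ℕ =>
      |-(1 / h) * ((1 / n : ℝ) * ∑ k ∈ Finset.range (n + 1),
        (-1 : ℝ) ^ k * (n.choose k : ℝ) * φ (θ + k * h))|) := by
  set S : ℕ → ℝ := fun n => ∑ k ∈ Finset.range (n + 1),
      (-1 : ℝ) ^ k * (n.choose k : ℝ) * φ (θ + k * h) with hS
  have key : ∀ n : ℕ, 1 ≤ n → |S n| ≤ M * (2 * h * b * exp 1) ^ n := by
    intro n hn
    set D : ℕ → ℝ := fun j => iteratedDerivWithin j φ (Ici θ) θ with hD
    set P : ℕ → ℝ := fun k => ∑ j ∈ Finset.range n,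
      ((k : ℝ) * h) ^ j / j.factorial * D j with hPdef
    have hsplit : S n = (∑ k ∈ Finset.range (n + 1),
        (-1 : ℝ) ^ k * (n.choose k : ℝ) * (φ (θ + k * h) - P k))
        + ∑ k ∈ Finset.range (n + 1), (-1 : ℝ) ^ k * (n.choose k : ℝ) * P k := by
      rw [← Finset.sum_add_distrib]
      exact Finset.sum_congr rfl fun k _ => by ring
    have hzero : ∑ k ∈ Finset.range (n + 1), (-1 : ℝ) ^ k * (n.choose k : ℝ) * P k = 0 := by
      have h1 : ∀ k ∈ Finset.range (n + 1), (-1 : ℝ) ^ k * (n.choose k : ℝ) * P k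
          = ∑ j ∈ Finset.range n,
            (h ^ j / j.factorial * D j) * ((-1 : ℝ) ^ k * (n.choose k : ℝ) * (k : ℝ) ^ j) := by
        intro k _
        rw [hPdef, Finset.mul_sum]
        exact Finset.sum_congr rfl fun j _ => by rw [mul_pow]; ring
      rw [Finset.sum_congr rfl h1, Finset.sum_comm]
      refine Finset.sum_eq_zero fun j hj => ?_
      rw [← Finset.mul_sum, alt_sum_pow n j (Finset.mem_range.mp hj), mul_zero]
    have hbig : |S n| ≤ (2 ^ n : ℝ) * (M * b ^ n * ((n : ℝ) * h) ^ n / n.factorial) := by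
      rw [hsplit, hzero, add_zero]
      calc |∑ k ∈ Finset.range (n + 1),
            (-1 : ℝ) ^ k * (n.choose k : ℝ) * (φ (θ + k * h) - P k)|
          ≤ ∑ k ∈ Finset.range (n + 1),
            |(-1 : ℝ) ^ k * (n.choose k : ℝ) * (φ (θ + k * h) - P k)| :=
            Finset.abs_sum_le_sum_abs _ _
        _ ≤ ∑ k ∈ Finset.range (n + 1),
            (n.choose k : ℝ) * (M * b ^ n * ((n : ℝ) * h) ^ n / n.factorial) := by
            refine Finset.sum_le_sum fun k hk => ?_
            rw [abs_mul, abs_mul, abs_pow, abs_neg, abs_one, one_pow, one_mul, Nat.abs_cast]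
            exact mul_le_mul_of_nonneg_left
              (taylor_claim h hh M b hM hb θ φ hC hbound n hn k
                (Nat.lt_succ_iff.mp (Finset.mem_range.mp hk)))
              (Nat.cast_nonneg _)
        _ = (2 ^ n : ℝ) * (M * b ^ n * ((n : ℝ) * h) ^ n / n.factorial) := by
            rw [← Finset.sum_mul]
            congr 1
            rw [← Nat.cast_sum, Nat.sum_range_choose]
            push_cast; ring
    refine hbig.trans ?_
    have hfac : ((n : ℝ)) ^ n / n.factorial ≤ exp 1 ^ n := by
      have h1 := Real.pow_div_factorial_le_exp (n:ℝ) (Nat.cast_nonneg n) n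
      rwa [show Real.exp (n : ℝ) = exp 1 ^ n by
        rw [← Real.exp_nat_mul]; norm_num] at h1
    have e1 : ((n : ℝ) * h) ^ n = (n : ℝ) ^ n * h ^ n := mul_pow _ _ _
    have e2 : (2 * h * b * exp 1 : ℝ) ^ n = 2 ^ n * h ^ n * b ^ n * exp 1 ^ n := by
      rw [mul_pow, mul_pow, mul_pow]
    rw [e1, e2]
    have : (2:ℝ) ^ n * (M * b ^ n * ((n:ℝ) ^ n * h ^ n) / n.factorial)
        = (M * (2 ^ n * h ^ n * b ^ n)) * ((n:ℝ) ^ n / n.factorial) := by ring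
    rw [this]
    calc (M * (2 ^ n * h ^ n * b ^ n)) * ((n:ℝ) ^ n / n.factorial)
        ≤ (M * (2 ^ n * h ^ n * b ^ n)) * exp 1 ^ n := by
          apply mul_le_mul_of_nonneg_left hfac (by positivity)
      _ = M * (2 ^ n * h ^ n * b ^ n * exp 1 ^ n) := by ring
  have hr0 : (0:ℝ) ≤ 2 * h * b * exp 1 := by positivity
  have hg : Summable (fun n : ℕ => M * (2 * h * b * exp 1) ^ n) :=
    (summable_geometric_of_lt_one hr0 hsmall).mul_left M
  have sum1 : Summable (fun n : ℕ => (1 / n : ℝ) * |S n|) := by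
    refine Summable.of_nonneg_of_le (fun n => by positivity) (fun n => ?_) hg
    rcases Nat.eq_zero_or_pos n with rfl | hn
    · simp [hM]
    · have h1 : (1 / (n:ℝ)) ≤ 1 := by
        rw [div_le_one (by exact_mod_cast hn)]
        exact_mod_cast hn
      calc (1 / (n:ℝ)) * |S n| ≤ 1 * |S n| :=
            mul_le_mul_of_nonneg_right h1 (abs_nonneg _)
        _ = |S n| := one_mul _
        _ ≤ M * (2 * h * b * exp 1) ^ n := key n hn
  refine ⟨sum1, ?_⟩
  refine (sum1.mul_left |1 / h|).congr fun n => ?_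
  have hnn : (0:ℝ) ≤ 1 / (n:ℝ) := by positivity
  rw [abs_mul, abs_neg, abs_mul, abs_of_nonneg hnn]
end

section
/- Let h > 0, M ≥ 0, b > 0, θ ∈ ℝ with 2·h·b·e < 1, and let N ≥ 1 be a natural number. Suppose φ : ℝ → ℝ is infinitely differentiable on [θ, ∞) and for every n ≥ 1, |φ^{(n)}(ξ)| ≤ M · b^n for all ξ ∈ [θ, θ + n·h]. Then the tail of the logarithmic series satisfies |∑_{n=N+1}^{∞} (1/n) ∑_{k=0}^{n} (−1)^k · C(n,k) · φ(θ + k·h)| ≤ (M / (√(2π) · (N+1)^{3/2})) · (2·h·b·e)^{N+1} / (1 − 2·h·b·e). -/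
open Set Real Filter

lemma my_within_eq (φ : ℝ → ℝ) (θ ξ : ℝ) (hξ : θ < ξ) (n : ℕ) :
    iteratedDerivWithin n φ (Ici θ) ξ = iteratedDeriv n φ ξ := by
  rw [iteratedDerivWithin, iteratedDeriv,
    iteratedFDerivWithin_congr_set (Filter.eventuallyEq_univ.2 (Ici_mem_nhds hξ)) n,
    iteratedFDerivWithin_univ]

lemma my_diff_identity (n : ℕ) (v : ℕ → ℝ) :
    ∑ k ∈ Finset.range (n+2), (-1:ℝ)^k * ((n+1).choose k) * v k
      = ∑ k ∈ Finset.range (n+1), (-1:ℝ)^k * (n.choose k) * (v k - v (k+1)) := by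
  have h1 : ∑ k ∈ Finset.range (n+2), (-1:ℝ)^k * ((n+1).choose k) * v k
      = (∑ k ∈ Finset.range (n+1), (-1:ℝ)^(k+1) * ((n+1).choose (k+1)) * v (k+1)) + v 0 := by
    rw [Finset.sum_range_succ' (fun k => (-1:ℝ)^k * ((n+1).choose k) * v k) (n+1)]
    simp
  have h2 : ∀ k, ((n+1).choose (k+1) : ℝ) = (n.choose k : ℝ) + (n.choose (k+1) : ℝ) := by
    intro k; rw [Nat.choose_succ_succ]; push_cast; ring
  have h3 : ∑ k ∈ Finset.range (n+2), (-1:ℝ)^k * (n.choose k) * v k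
      = (∑ k ∈ Finset.range (n+1), (-1:ℝ)^(k+1) * (n.choose (k+1)) * v (k+1)) + v 0 := by
    rw [Finset.sum_range_succ' (fun k => (-1:ℝ)^k * (n.choose k) * v k) (n+1)]
    simp
  have h4 : ∑ k ∈ Finset.range (n+2), (-1:ℝ)^k * (n.choose k) * v k
      = ∑ k ∈ Finset.range (n+1), (-1:ℝ)^k * (n.choose k) * v k := by
    rw [Finset.sum_range_succ]
    simp [Nat.choose_succ_self]
  have h5 : ∑ k ∈ Finset.range (n+1), (-1:ℝ)^(k+1) * (n.choose (k+1)) * v (k+1)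
      = (∑ k ∈ Finset.range (n+1), (-1:ℝ)^k * (n.choose k) * v k) - v 0 := by
    rw [← h4, h3]; ring
  rw [h1]
  calc (∑ k ∈ Finset.range (n+1), (-1:ℝ)^(k+1) * ((n+1).choose (k+1)) * v (k+1)) + v 0
      = (∑ k ∈ Finset.range (n+1), ((-1:ℝ)^(k+1) * (n.choose k) * v (k+1)
          + (-1:ℝ)^(k+1) * (n.choose (k+1)) * v (k+1))) + v 0 := by
        congr 1; apply Finset.sum_congr rfl; intro k _; rw [h2]; ring
    _ = (∑ k ∈ Finset.range (n+1), (-1:ℝ)^(k+1) * (n.choose k) * v (k+1))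
          + ((∑ k ∈ Finset.range (n+1), (-1:ℝ)^k * (n.choose k) * v k) - v 0) + v 0 := by
        rw [Finset.sum_add_distrib, h5]
    _ = ∑ k ∈ Finset.range (n+1), (-1:ℝ)^k * (n.choose k) * (v k - v (k+1)) := by
        have h6 : ∑ k ∈ Finset.range (n+1), (-1:ℝ)^k * (n.choose k) * (v k - v (k+1))
            = (∑ k ∈ Finset.range (n+1), (-1:ℝ)^k * (n.choose k) * v k)
              + ∑ k ∈ Finset.range (n+1), (-1:ℝ)^(k+1) * (n.choose k) * v (k+1) := by
          rw [← Finset.sum_add_distrib]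
          apply Finset.sum_congr rfl; intro k _; ring
        rw [h6]; ring

lemma my_fd_bound (h : ℝ) (hh : 0 < h) :
    ∀ n : ℕ, ∀ B a : ℝ, ∀ ψ : ℝ → ℝ,
      ContDiffOn ℝ (⊤ : ℕ∞) ψ (Ici a) →
      (∀ ξ ∈ Ioc a (a + (n+1) * h), |iteratedDeriv (n+1) ψ ξ| ≤ B) →
      |∑ k ∈ Finset.range (n+2), (-1:ℝ)^k * ((n+1).choose k : ℝ) * ψ (a + k*h)|
        ≤ h^(n+1) * B := by
  intro n
  induction n with
  | zero =>
    intro B a ψ hC hbd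
    have hab : a < a + h := by linarith
    have hcont : ContinuousOn ψ (Icc a (a+h)) :=
      hC.continuousOn.mono (fun x hx => hx.1)
    have hder : ∀ x ∈ Ioo a (a+h), HasDerivAt ψ (deriv ψ x) x := by
      intro x hx
      exact ((hC.contDiffAt (Ici_mem_nhds hx.1)).differentiableAt (by simp)).hasDerivAt
    obtain ⟨c, hc, hceq⟩ := exists_hasDerivAt_eq_slope ψ (deriv ψ) hab hcont hder
    have hsum : ∑ k ∈ Finset.range 2, (-1:ℝ)^k * ((1).choose k : ℝ) * ψ (a + k*h)
        = ψ a - ψ (a + h) := by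
      simp [Finset.sum_range_succ]; ring
    rw [hsum]
    have hne : a + h - a ≠ 0 := by linarith
    rw [eq_div_iff hne] at hceq
    have hbc : |deriv ψ c| ≤ B := by
      have := hbd c ⟨hc.1, by push_cast; nlinarith [hc.2]⟩
      simpa [iteratedDeriv_one] using this
    have habs : |ψ a - ψ (a+h)| = h * |deriv ψ c| := by
      have h2 : ψ a - ψ (a + h) = -(deriv ψ c * h) := by
        have : a + h - a = h := by ring
        rw [this] at hceq; linarith
      rw [h2, abs_neg, abs_mul, abs_of_pos hh]; ring
    rw [habs]
    calc h * |deriv ψ c| ≤ h * B := by nlinarith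
      _ = h^1 * B := by ring
  | succ m IH =>
    intro B a ψ hC hbd
    have hab : a < a + h := by linarith
    set F : ℝ → ℝ := fun x => ∑ k ∈ Finset.range (m+2), (-1:ℝ)^k * ((m+1).choose k : ℝ) * ψ (x + k*h) with hF
    have hgoal_eq : ∑ k ∈ Finset.range (m+3), (-1:ℝ)^k * ((m+2).choose k : ℝ) * ψ (a + k*h)
        = F a - F (a + h) := by
      have := my_diff_identity (m+1) (fun k => ψ (a + k*h))
      rw [show m+3 = (m+1)+2 by ring, this]
      rw [hF]
      rw [← Finset.sum_sub_distrib]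
      apply Finset.sum_congr rfl
      intro k _
      push_cast
      have : a + ((k:ℝ) + 1) * h = a + h + (k:ℝ) * h := by ring
      rw [this]; ring
    have hcont : ContinuousOn F (Icc a (a+h)) := by
      apply continuousOn_finset_sum
      intro k _
      apply ContinuousOn.mul continuousOn_const
      have hcc : ContinuousOn (fun x : ℝ => x + (k:ℝ)*h) (Icc a (a+h)) :=
        Continuous.continuousOn (by continuity)
      refine ContinuousOn.comp hC.continuousOn hcc ?_
      intro x hx
      have hkh : (0:ℝ) ≤ (k:ℝ)*h := by positivity
      exact le_trans hx.1 (by linarith : x ≤ x + (k:ℝ)*h)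
    have hder : ∀ x ∈ Ioo a (a+h), HasDerivAt F
        (∑ k ∈ Finset.range (m+2), (-1:ℝ)^k * ((m+1).choose k : ℝ) * deriv ψ (x + k*h)) x := by
      intro x hx
      apply HasDerivAt.fun_sum
      intro k _
      have hxk : a < x + k*h := by
        have : (0:ℝ) ≤ (k:ℝ)*h := by positivity
        linarith [hx.1]
      have hψd : HasDerivAt ψ (deriv ψ (x + k*h)) (x + k*h) :=
        ((hC.contDiffAt (Ici_mem_nhds hxk)).differentiableAt (by simp)).hasDerivAt
      have hcomp : HasDerivAt (fun y : ℝ => ψ (y + k*h)) (deriv ψ (x + k*h) * 1) x :=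
        HasDerivAt.comp x hψd ((hasDerivAt_id x).add_const ((k:ℝ)*h))
      simpa using hcomp.const_mul ((-1:ℝ)^k * ((m+1).choose k : ℝ))
    obtain ⟨c, hc, hceq⟩ := exists_hasDerivAt_eq_slope F _ hab hcont hder
    have hcd : ContDiffOn ℝ (⊤ : ℕ∞) (deriv ψ) (Ici c) := by
      have h1 : ContDiffOn ℝ (⊤ : ℕ∞) ψ (Ioi a) := hC.mono Ioi_subset_Ici_self
      have h2 : ContDiffOn ℝ (⊤ : ℕ∞) (deriv ψ) (Ioi a) :=
        h1.deriv_of_isOpen isOpen_Ioi (by simp)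
      exact h2.mono (fun x hx => lt_of_lt_of_le hc.1 hx)
    have hbd' : ∀ ξ ∈ Ioc c (c + (m+1) * h), |iteratedDeriv (m+1) (deriv ψ) ξ| ≤ B := by
      intro ξ hξ
      have heq : iteratedDeriv (m+1) (deriv ψ) ξ = iteratedDeriv (m+1+1) ψ ξ := by
        simp only [iteratedDeriv_succ']
      rw [heq]
      apply hbd
      refine ⟨lt_trans hc.1 hξ.1, ?_⟩
      have h2 := hξ.2
      have h3 := hc.2
      push_cast at h2 ⊢
      nlinarith
    have hIH := IH B c (deriv ψ) hcd hbd'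
    rw [hgoal_eq]
    have hne : a + h - a ≠ 0 := by linarith
    rw [eq_div_iff hne] at hceq
    have hsimp : a + h - a = h := by ring
    rw [hsimp] at hceq
    have habs : |F a - F (a+h)|
        = h * |∑ k ∈ Finset.range (m+2), (-1:ℝ)^k * ((m+1).choose k : ℝ) * deriv ψ (c + k*h)| := by
      have h2 : F a - F (a + h)
          = -((∑ k ∈ Finset.range (m+2), (-1:ℝ)^k * ((m+1).choose k : ℝ) * deriv ψ (c + k*h)) * h) := by
        linarith
      rw [h2, abs_neg, abs_mul, abs_of_pos hh]; ring
    rw [habs]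
    calc h * |∑ k ∈ Finset.range (m+2), (-1:ℝ)^k * ((m+1).choose k : ℝ) * deriv ψ (c + k*h)|
        ≤ h * (h^(m+1) * B) := by nlinarith
      _ = h^(m+1+1) * B := by ring

lemma my_fd_bound' (h : ℝ) (hh : 0 < h) (m : ℕ) (hm : 1 ≤ m) (B a : ℝ) (ψ : ℝ → ℝ)
    (hC : ContDiffOn ℝ (⊤ : ℕ∞) ψ (Ici a))
    (hbd : ∀ ξ ∈ Ioc a (a + m * h), |iteratedDeriv m ψ ξ| ≤ B) :
    |∑ k ∈ Finset.range (m+1), (-1:ℝ)^k * (m.choose k : ℝ) * ψ (a + k*h)| ≤ h^m * B := by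
  obtain ⟨n, rfl⟩ : ∃ n, m = n + 1 := ⟨m - 1, by omega⟩
  apply my_fd_bound h hh n B a ψ hC
  intro ξ hξ
  apply hbd ξ
  constructor
  · exact hξ.1
  · have := hξ.2
    push_cast at this ⊢
    linarith

lemma my_key (N m : ℕ) (hm : N + 1 ≤ m) :
    Real.sqrt (2*π) * ((N+1:ℝ)) ^ ((3:ℝ)/2) ≤ (m:ℝ) * (2 * exp 1)^m := by
  have hm1 : 1 ≤ (m:ℝ) := by exact_mod_cast Nat.one_le_iff_ne_zero.2 (by omega)
  have hmpos : (0:ℝ) < m := by linarith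
  have h1 : ((N+1:ℝ)) ^ ((3:ℝ)/2) ≤ ((m:ℝ)) ^ ((3:ℝ)/2) := by
    apply Real.rpow_le_rpow (by positivity) ?_ (by norm_num)
    exact_mod_cast hm
  have h2 : ((m:ℝ)) ^ ((3:ℝ)/2) = (m:ℝ) * Real.sqrt (m:ℝ) := by
    rw [show (3:ℝ)/2 = 1 + 1/2 by norm_num, Real.rpow_add hmpos, Real.rpow_one,
      Real.sqrt_eq_rpow]
  have h3 : Real.sqrt (m:ℝ) ≤ (m:ℝ) := by
    nlinarith [Real.sq_sqrt hmpos.le, Real.sqrt_nonneg (m:ℝ), sq_nonneg (Real.sqrt (m:ℝ) - 1)]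
  have h4 : (m:ℝ) ≤ 2^m := by
    have := Nat.lt_two_pow_self (n := m)
    exact_mod_cast this.le
  have h5 : Real.sqrt (2*π) ≤ exp 1 := by
    have hpi : π < 3.15 := Real.pi_lt_d2
    have : Real.sqrt (2*π) ≤ Real.sqrt ((2.7:ℝ)^2) := by
      apply Real.sqrt_le_sqrt; nlinarith
    rw [Real.sqrt_sq (by norm_num)] at this
    linarith [Real.exp_one_gt_d9]
  have h6 : exp 1 ≤ exp 1 ^ m := by
    apply le_self_pow₀ ?_ (by omega)
    linarith [Real.exp_one_gt_d9]
  have hs : 0 ≤ Real.sqrt (2*π) := Real.sqrt_nonneg _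
  have hN32 : (0:ℝ) ≤ ((N+1:ℝ)) ^ ((3:ℝ)/2) := by positivity
  calc Real.sqrt (2*π) * ((N+1:ℝ)) ^ ((3:ℝ)/2)
      ≤ exp 1 ^ m * ((m:ℝ) * 2^m) := by
        apply mul_le_mul (le_trans h5 h6) ?_ hN32 (by positivity)
        calc ((N+1:ℝ)) ^ ((3:ℝ)/2) ≤ ((m:ℝ)) ^ ((3:ℝ)/2) := h1
          _ = (m:ℝ) * Real.sqrt (m:ℝ) := h2
          _ ≤ (m:ℝ) * 2^m := by nlinarith [Real.sqrt_nonneg (m:ℝ)]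
    _ = (m:ℝ) * (2 * exp 1)^m := by rw [mul_pow]; ring


set_option maxHeartbeats 1000000 in
open Set Real in
/-- Lemma 2 of the paper: the tail of the logarithmic series
satisfies
`|∑_{n=N+1}^∞ (1/n) (𝒥 - 𝒯_h)^n φ(θ)| ≤
  (M / (√(2π) (N+1)^{3/2})) (2hbe)^{N+1} / (1 - 2hbe)`. -/
theorem blend_lemma_two
    (h : ℝ) (hh : 0 < h) (M b : ℝ) (hM : 0 ≤ M) (hb : 0 < b) (θ : ℝ)
    (hsmall : 2 * h * b * exp 1 < 1) (N : ℕ) (hN : 1 ≤ N) (φ : ℝ → ℝ)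
    (hC : ContDiffOn ℝ (⊤ : ℕ∞) φ (Ici θ))
    (hbound : ∀ n : ℕ, 1 ≤ n → ∀ ξ ∈ Icc θ (θ + n * h),
      |iteratedDerivWithin n φ (Ici θ) ξ| ≤ M * b ^ n) :
    |∑' n : ℕ, (1 / (n + (N + 1)) : ℝ) *
        ∑ k ∈ Finset.range (n + (N + 1) + 1),
          (-1 : ℝ) ^ k * ((n + (N + 1)).choose k : ℝ) * φ (θ + k * h)| ≤
      M / (Real.sqrt (2 * π) * ((N + 1 : ℝ)) ^ ((3 : ℝ) / 2)) *
        ((2 * h * b * exp 1) ^ (N + 1) / (1 - 2 * h * b * exp 1)) := by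
  have hrpos : (0:ℝ) < 2 * h * b * exp 1 := by positivity
  have hKpos : (0:ℝ) < Real.sqrt (2 * π) * ((N + 1 : ℝ)) ^ ((3 : ℝ) / 2) := by positivity
  set r : ℝ := 2 * h * b * exp 1 with hrdef
  set K : ℝ := Real.sqrt (2 * π) * ((N + 1 : ℝ)) ^ ((3 : ℝ) / 2) with hKdef
  set c : ℝ := M / K with hcdef
  have hc0 : 0 ≤ c := by positivity
  have hfb : ∀ n : ℕ, |(1 / (n + (N + 1)) : ℝ) *
        ∑ k ∈ Finset.range (n + (N + 1) + 1),
          (-1 : ℝ) ^ k * ((n + (N + 1)).choose k : ℝ) * φ (θ + k * h)| ≤ c * r ^ (n + (N+1)) := by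
    intro n
    set m : ℕ := n + (N + 1) with hmdef
    have hm2 : 2 ≤ m := by omega
    have hmpos : (0:ℝ) < (m:ℝ) := by exact_mod_cast (by omega : 0 < m)
    have hbd : ∀ ξ ∈ Ioc θ (θ + m * h), |iteratedDeriv m φ ξ| ≤ M * b ^ m := by
      intro ξ hξ
      rw [← my_within_eq φ θ ξ hξ.1 m]
      exact hbound m (by omega) ξ ⟨hξ.1.le, hξ.2⟩
    have hin := my_fd_bound' h hh m (by omega) (M * b ^ m) θ φ hC hbd
    have hcast : ((n:ℝ) + ((N:ℝ) + 1)) = (m:ℝ) := by rw [hmdef]; push_cast; ring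
    rw [hcast]
    have key := my_key N m (by omega)
    rw [← hKdef] at key
    have hS : |∑ k ∈ Finset.range (m + 1),
          (-1 : ℝ) ^ k * (m.choose k : ℝ) * φ (θ + k * h)| ≤ h^m * (M * b^m) := hin
    have habs : |(1/(m:ℝ)) * ∑ k ∈ Finset.range (m + 1),
          (-1 : ℝ) ^ k * (m.choose k : ℝ) * φ (θ + k * h)|
        = (1/(m:ℝ)) * |∑ k ∈ Finset.range (m + 1),
          (-1 : ℝ) ^ k * (m.choose k : ℝ) * φ (θ + k * h)| := by
      rw [abs_mul, abs_of_pos (by positivity)]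
    rw [habs]
    have hr_eq : r ^ m = (h*b)^m * (2*exp 1)^m := by
      rw [show r = (h*b)*(2*exp 1) by rw [hrdef]; ring, mul_pow]
    calc (1/(m:ℝ)) * |∑ k ∈ Finset.range (m + 1),
          (-1 : ℝ) ^ k * (m.choose k : ℝ) * φ (θ + k * h)|
        ≤ (1/(m:ℝ)) * (h^m * (M * b^m)) := by
          apply mul_le_mul_of_nonneg_left hS (by positivity)
      _ ≤ c * r ^ m := by
          rw [hr_eq, hcdef, one_div_mul_eq_div, div_mul_eq_mul_div,
            div_le_div_iff₀ hmpos hKpos]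
          have h1 : M * ((h*b)^m) * K ≤ M * ((h*b)^m) * ((m:ℝ) * (2*exp 1)^m) :=
            mul_le_mul_of_nonneg_left key (by positivity)
          rw [mul_pow] at h1 ⊢
          nlinarith [h1]
  have hgeom : Summable (fun n : ℕ => r ^ n) := summable_geometric_of_lt_one hrpos.le hsmall
  have hg : Summable (fun n : ℕ => c * r ^ (n + (N+1))) := by
    apply Summable.congr (hgeom.mul_left (c * r^(N+1)))
    intro n; rw [pow_add]; ring
  have hf_sum : Summable (fun n : ℕ => (1 / (n + (N + 1)) : ℝ) *
        ∑ k ∈ Finset.range (n + (N + 1) + 1),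
          (-1 : ℝ) ^ k * ((n + (N + 1)).choose k : ℝ) * φ (θ + k * h)) := by
    apply Summable.of_norm_bounded hg
    intro n; rw [Real.norm_eq_abs]; exact hfb n
  calc |∑' n : ℕ, (1 / (n + (N + 1)) : ℝ) *
        ∑ k ∈ Finset.range (n + (N + 1) + 1),
          (-1 : ℝ) ^ k * ((n + (N + 1)).choose k : ℝ) * φ (θ + k * h)|
      ≤ ∑' n : ℕ, |(1 / (n + (N + 1)) : ℝ) *
        ∑ k ∈ Finset.range (n + (N + 1) + 1),
          (-1 : ℝ) ^ k * ((n + (N + 1)).choose k : ℝ) * φ (θ + k * h)| := by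
        have h1 : Summable (fun n : ℕ => ‖(1 / (n + (N + 1)) : ℝ) *
            ∑ k ∈ Finset.range (n + (N + 1) + 1),
              (-1 : ℝ) ^ k * ((n + (N + 1)).choose k : ℝ) * φ (θ + k * h)‖) := by
          simp only [Real.norm_eq_abs]; exact hf_sum.abs
        simpa only [Real.norm_eq_abs] using norm_tsum_le_tsum_norm h1
    _ ≤ ∑' n : ℕ, c * r ^ (n + (N+1)) := Summable.tsum_le_tsum hfb hf_sum.abs hg
    _ = c * (r^(N+1) * (1-r)⁻¹) := by
        rw [show (fun n : ℕ => c * r^(n+(N+1))) = fun n : ℕ => (c * r^(N+1)) * r^n from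
          funext (fun n => by rw [pow_add]; ring)]
        rw [tsum_mul_left, tsum_geometric_of_lt_one hrpos.le hsmall]
        ring
    _ = M / K * (r^(N+1) / (1-r)) := by rw [hcdef]; ring
end

section
/- Let h > 0, M ≥ 0, b > 0, θ ∈ ℝ with 2·h·b·e < 1, and let N ≥ 1. Suppose φ : ℝ → ℝ is infinitely differentiable on [θ, ∞), for every n ≥ 1 one has |φ^{(n)}(ξ)| ≤ M · b^n for all ξ ∈ [θ, θ + n·h], and moreover the logarithmic series represents the derivative: φ'(θ) = −(1/h) ∑_{n=1}^{∞} (1/n) ∑_{k=0}^{n} (−1)^k · C(n,k) · φ(θ + k·h). Define the BLEND approximation of order N by Δ(N,h)φ(θ) = −(1/h) ∑_{n=1}^{N} (1/n) ∑_{k=0}^{n} (−1)^k · C(n,k) · φ(θ + k·h). Then |φ'(θ) − Δ(N,h)φ(θ)| ≤ (1/h) · (M / (√(2π) · (N+1)^{3/2})) · (2·h·b·e)^{N+1} / (1 − 2·h·b·e). -/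
open Set Real

noncomputable def Dd (h : ℝ) (n : ℕ) (ψ : ℝ → ℝ) (a : ℝ) : ℝ :=
  ∑ k ∈ Finset.range (n+1), (-1:ℝ)^k * (n.choose k : ℝ) * ψ (a + k * h)

lemma Dd_succ (h : ℝ) (n : ℕ) (ψ : ℝ → ℝ) (a : ℝ) :
    Dd h (n+1) ψ a = Dd h n ψ a - Dd h n (fun x => ψ (x + h)) a := by
  have e1 : (∑ k ∈ Finset.range (n+1), (-1:ℝ)^k * (n.choose k : ℝ) * ψ (a + k * h))
      = (∑ i ∈ Finset.range (n+1), (-1:ℝ)^(i+1) * (n.choose (i+1) : ℝ) * ψ (a + (↑(i+1)) * h))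
        + (-1:ℝ)^(0:ℕ) * (n.choose 0 : ℝ) * ψ (a + ((0:ℕ):ℝ) * h) := by
    rw [Finset.sum_range_succ' (fun k => (-1:ℝ)^k * (n.choose k : ℝ) * ψ (a + k * h)) n]
    rw [Finset.sum_range_succ (fun i => (-1:ℝ)^(i+1) * (n.choose (i+1) : ℝ) * ψ (a + (↑(i+1)) * h)) n]
    simp [Nat.choose_succ_self]
  unfold Dd
  rw [Finset.sum_range_succ' (fun k => (-1:ℝ)^k * ((n+1).choose k : ℝ) * ψ (a + k * h)) (n+1)]
  rw [e1]
  have e2 : ∀ i ∈ Finset.range (n+1),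
      (-1:ℝ)^(i+1) * (((n+1).choose (i+1) : ℕ) : ℝ) * ψ (a + (↑(i+1)) * h)
      = (-1:ℝ)^(i+1) * (n.choose (i+1) : ℝ) * ψ (a + (↑(i+1)) * h)
        - (-1:ℝ)^i * (n.choose i : ℝ) * ψ (a + (i:ℝ) * h + h) := by
    intro i _
    have : a + (↑(i+1):ℝ) * h = a + (i:ℝ) * h + h := by push_cast; ring
    rw [this, Nat.choose_succ_succ]
    push_cast
    ring
  rw [Finset.sum_congr rfl e2, Finset.sum_sub_distrib]
  simp
  ring

lemma Dd_sub (h : ℝ) (n : ℕ) (f g : ℝ → ℝ) (a : ℝ) :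
    Dd h n (fun x => f x - g x) a = Dd h n f a - Dd h n g a := by
  simp [Dd, mul_sub, Finset.sum_sub_distrib]

lemma Dd_bound (h : ℝ) (hh : 0 < h) :
    ∀ (n : ℕ) (ψ : ℝ → ℝ) (F : ℕ → ℝ → ℝ) (a K : ℝ), 0 ≤ K →
    F 0 = ψ →
    (∀ i < n, ∀ x ∈ Icc a (a + n * h), HasDerivWithinAt (F i) (F (i+1) x) (Ici a) x) →
    (∀ x ∈ Icc a (a + n * h), |F n x| ≤ K) →
    |Dd h n ψ a| ≤ h ^ n * K := by
  intro n
  induction n with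
  | zero =>
    intro ψ F a K hK h0 _ hB
    have : Dd h 0 ψ a = ψ a := by simp [Dd]
    rw [this, pow_zero, one_mul, ← h0]
    refine hB a ⟨le_rfl, ?_⟩
    simp only [Nat.cast_zero, zero_mul, add_zero, le_refl]
  | succ n ih =>
    intro ψ F a K hK h0 hD hB
    have hsub : Icc a (a + n * h) ⊆ Icc a (a + ((n+1:ℕ):ℝ) * h) := by
      apply Icc_subset_Icc le_rfl
      push_cast
      nlinarith
    rw [Dd_succ]
    have key : Dd h n ψ a - Dd h n (fun x => ψ (x + h)) a
        = Dd h n (fun x => ψ x - ψ (x + h)) a := (Dd_sub h n ψ (fun x => ψ (x+h)) a).symm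
    rw [key]
    have hKh : 0 ≤ h * K := by positivity
    have := ih (fun x => ψ x - ψ (x + h)) (fun i x => F i x - F i (x + h)) a (h * K) hKh
      (by funext x; simp [h0])
      (by
        intro i hi x hx
        have hx' : x ∈ Icc a (a + ((n+1:ℕ):ℝ) * h) := hsub hx
        have hxh : x + h ∈ Icc a (a + ((n+1:ℕ):ℝ) * h) := by
          constructor
          · linarith [hx.1]
          · have := hx.2; push_cast; push_cast at this; nlinarith
        have d1 : HasDerivWithinAt (F i) (F (i+1) x) (Ici a) x :=
          hD i (by omega) x hx'
        have d2 : HasDerivWithinAt (fun y => F i (y + h)) (F (i+1) (x + h)) (Ici a) x := by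
          have inner : HasDerivWithinAt (fun y : ℝ => y + h) 1 (Ici a) x :=
            ((hasDerivAt_id x).add_const h).hasDerivWithinAt
          have outer : HasDerivWithinAt (F i) (F (i+1) (x+h)) (Ici a) (x + h) :=
            hD i (by omega) (x+h) hxh
          have maps : MapsTo (fun y : ℝ => y + h) (Ici a) (Ici a) := by
            intro y hy; simp only [mem_Ici] at *; linarith
          have := HasDerivWithinAt.comp x outer inner maps
          rw [mul_one] at this
          exact this
        exact d1.sub d2)
      (by
        intro x hx
        have hxIci : Icc x (x + h) ⊆ Ici a := by
          intro y hy; exact le_trans hx.1 hy.1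
        have hIcc : Icc x (x + h) ⊆ Icc a (a + ((n+1:ℕ):ℝ) * h) := by
          intro y hy
          constructor
          · exact le_trans hx.1 hy.1
          · have := hx.2
            have := hy.2
            push_cast at *
            nlinarith
        have mvt := Convex.norm_image_sub_le_of_norm_hasDerivWithin_le
          (f := F n) (f' := fun y => F (n+1) y) (C := K)
          (fun y hy => (hD n (by omega) y (hIcc hy)).mono hxIci)
          (fun y hy => by
            rw [Real.norm_eq_abs]
            exact hB y (hIcc hy))
          (convex_Icc x (x+h))
          (left_mem_Icc.2 (by linarith))
          (right_mem_Icc.2 (by linarith))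
        rw [Real.norm_eq_abs] at mvt
        have : |F n x - F n (x + h)| = |F n (x + h) - F n x| := abs_sub_comm _ _
        rw [this]
        calc |F n (x+h) - F n x| ≤ K * |x + h - x| := by simpa using mvt
          _ = h * K := by rw [show x + h - x = h by ring, abs_of_pos hh]; ring)
    calc |Dd h n (fun x => ψ x - ψ (x + h)) a| ≤ h ^ n * (h * K) := this
      _ = h ^ (n+1) * K := by ring

set_option maxHeartbeats 1600000 in
open Set Real in
/-- error bound for the BLEND approximation
`Δ(N,h)φ(θ) = -(1/h) ∑_{n=1}^N (1/n) ∑_{k=0}^n (-1)^k C(n,k) φ(θ + k h)`: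
`|φ'(θ) - Δ(N,h)φ(θ)| ≤ (1/h) (M/(√(2π)(N+1)^{3/2})) (2hbe)^{N+1}/(1-2hbe)`.
(The `n = 0` term of the logarithmic series is `0` since `1/0 = 0` in `ℝ`.) -/
theorem blend_approximation_error_bound
    (h : ℝ) (hh : 0 < h) (M b : ℝ) (hM : 0 ≤ M) (hb : 0 < b) (θ : ℝ)
    (hsmall : 2 * h * b * exp 1 < 1) (N : ℕ) (hN : 1 ≤ N) (φ : ℝ → ℝ)
    (hC : ContDiffOn ℝ (⊤ : ℕ∞) φ (Ici θ))
    (hbound : ∀ n : ℕ, 1 ≤ n → ∀ ξ ∈ Icc θ (θ + n * h),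
      |iteratedDerivWithin n φ (Ici θ) ξ| ≤ M * b ^ n)
    (hrepr : deriv φ θ =
      -(1 / h) * ∑' n : ℕ, (1 / n : ℝ) *
        ∑ k ∈ Finset.range (n + 1),
          (-1 : ℝ) ^ k * (n.choose k : ℝ) * φ (θ + k * h)) :
    |deriv φ θ -
        (-(1 / h) * ∑ n ∈ Finset.Icc 1 N, (1 / n : ℝ) *
          ∑ k ∈ Finset.range (n + 1),
            (-1 : ℝ) ^ k * (n.choose k : ℝ) * φ (θ + k * h))| ≤
      (1 / h) * (M / (Real.sqrt (2 * π) * ((N + 1 : ℝ)) ^ ((3 : ℝ) / 2))) *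
        ((2 * h * b * exp 1) ^ (N + 1) / (1 - 2 * h * b * exp 1)) := by
  set r : ℝ := 2 * h * b * exp 1 with hrdef
  have hr0 : 0 < r := by positivity
  have hr1 : r < 1 := hsmall
  set f : ℕ → ℝ := fun n => (1 / n : ℝ) *
      ∑ k ∈ Finset.range (n + 1),
        (-1 : ℝ) ^ k * (n.choose k : ℝ) * φ (θ + k * h) with hfdef
  have hfD : ∀ n, f n = (1 / n : ℝ) * Dd h n φ θ := fun n => rfl
  -- derivative chain
  have hderiv : ∀ i : ℕ, ∀ x ∈ Ici θ,
      HasDerivWithinAt (iteratedDerivWithin i φ (Ici θ))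
        (iteratedDerivWithin (i+1) φ (Ici θ) x) (Ici θ) x := by
    intro i x hx
    have hdiff : DifferentiableOn ℝ (iteratedDerivWithin i φ (Ici θ)) (Ici θ) :=
      hC.differentiableOn_iteratedDerivWithin (by exact_mod_cast ENat.coe_lt_top i) (uniqueDiffOn_Ici θ)
    have := (hdiff x hx).hasDerivWithinAt
    rwa [← iteratedDerivWithin_succ] at this
  -- term bound
  have hterm : ∀ m : ℕ, 1 ≤ m → |Dd h m φ θ| ≤ h ^ m * (M * b ^ m) := by
    intro m hm
    refine Dd_bound h hh m φ (fun i => iteratedDerivWithin i φ (Ici θ)) θ (M * b ^ m)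
      (by positivity) ?_ ?_ ?_
    · funext x; simp
    · intro i _ x hx
      exact hderiv i x hx.1
    · intro x hx
      exact hbound m hm x hx
  have habs : ∀ m : ℕ, 1 ≤ m → |f m| ≤ (1 / m) * (h ^ m * (M * b ^ m)) := by
    intro m hm
    rw [hfD, abs_mul]
    have h1 : |(1 / m : ℝ)| = 1 / m := abs_of_nonneg (by positivity)
    rw [h1]
    exact mul_le_mul_of_nonneg_left (hterm m hm) (by positivity)
  have hf0 : f 0 = 0 := by simp [hfdef]
  -- global bound for summability
  have hhb1 : h * b < 1 := by nlinarith [Real.exp_one_gt_d9, mul_pos hh hb]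
  have hfabs_le : ∀ m : ℕ, |f m| ≤ M * (h * b) ^ m := by
    intro m
    rcases Nat.eq_zero_or_pos m with rfl | hm
    · simp [hf0, hM]
    · calc |f m| ≤ (1 / m) * (h ^ m * (M * b ^ m)) := habs m hm
        _ ≤ 1 * (h ^ m * (M * b ^ m)) := by
            apply mul_le_mul_of_nonneg_right _ (by positivity)
            rw [div_le_one (by exact_mod_cast hm)]
            exact_mod_cast hm
        _ = M * (h * b) ^ m := by rw [mul_pow]; ring
  have hsumfabs : Summable (fun m => |f m|) := by
    apply Summable.of_nonneg_of_le (fun m => abs_nonneg _) hfabs_le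
    exact (summable_geometric_of_lt_one (by positivity) hhb1).mul_left M
  have hsumf : Summable f := hsumfabs.of_abs
  -- key comparison with geometric series
  set C : ℝ := M / (Real.sqrt (2 * π) * ((N:ℝ) + 1) ^ ((3 : ℝ) / 2)) with hCdef
  have hSpos : 0 < Real.sqrt (2 * π) * ((N:ℝ) + 1) ^ ((3 : ℝ) / 2) := by positivity
  have hsqrt2pi : Real.sqrt (2 * π) ≤ exp 1 := by
    rw [show (exp 1 : ℝ) = Real.sqrt ((exp 1)^2) from (Real.sqrt_sq (exp_pos 1).le).symm]
    apply Real.sqrt_le_sqrt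
    nlinarith [Real.pi_lt_d2, Real.exp_one_gt_d9]
  have hkey : ∀ m : ℕ, N + 1 ≤ m → |f m| ≤ C * r ^ m := by
    intro m hm
    have hm1 : 1 ≤ m := le_trans (by omega) hm
    have hmR : (1:ℝ) ≤ (m:ℝ) := by exact_mod_cast hm1
    have hmpos : (0:ℝ) < m := by linarith
    -- S ≤ m * (2^m * (exp 1)^m)
    have step1 : ((N:ℝ) + 1) ^ ((3 : ℝ) / 2) ≤ (m:ℝ) ^ ((3 : ℝ) / 2) := by
      apply Real.rpow_le_rpow (by positivity) (by exact_mod_cast hm) (by norm_num)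
    have step2 : (m:ℝ) ^ ((3 : ℝ) / 2) = (m:ℝ) * Real.sqrt m := by
      rw [show ((3:ℝ)/2) = 1 + 1/2 by norm_num, Real.rpow_add hmpos, Real.rpow_one,
        ← Real.sqrt_eq_rpow]
    have hsqm : Real.sqrt m ≤ (m:ℝ) := by
      have h2 := Real.sqrt_le_sqrt (show (m:ℝ) ≤ (m:ℝ) * m by nlinarith)
      rwa [Real.sqrt_mul_self hmpos.le] at h2
    have hm2pow : (m:ℝ) ≤ 2 ^ m := by exact_mod_cast (Nat.lt_two_pow_self (n := m)).le
    have hexp : exp 1 ≤ (exp 1) ^ m :=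
      le_self_pow₀ (by nlinarith [Real.exp_one_gt_d9]) (by omega)
    have hS_le : Real.sqrt (2 * π) * ((N:ℝ) + 1) ^ ((3 : ℝ) / 2)
        ≤ (m:ℝ) * (2 ^ m * (exp 1) ^ m) := by
      calc Real.sqrt (2 * π) * ((N:ℝ) + 1) ^ ((3 : ℝ) / 2)
          ≤ exp 1 * ((m:ℝ) * Real.sqrt m) := by
            rw [← step2]
            exact mul_le_mul hsqrt2pi step1 (by positivity) (exp_pos 1).le
        _ ≤ (exp 1) ^ m * ((m:ℝ) * 2 ^ m) := by
            apply mul_le_mul hexp _ (by positivity) (by positivity)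
            exact mul_le_mul_of_nonneg_left (le_trans hsqm hm2pow) hmpos.le
        _ = (m:ℝ) * (2 ^ m * (exp 1) ^ m) := by ring
    calc |f m| ≤ (1 / m) * (h ^ m * (M * b ^ m)) := habs m hm1
      _ ≤ C * r ^ m := by
          rw [hCdef, hrdef]
          rw [show (2 * h * b * exp 1) ^ m = 2 ^ m * h ^ m * b ^ m * (exp 1) ^ m by
            rw [mul_pow, mul_pow, mul_pow]]
          rw [div_mul_eq_mul_div, one_mul, div_mul_eq_mul_div, div_le_div_iff₀ hmpos hSpos]
          have hA : (0:ℝ) ≤ h ^ m * (M * b ^ m) := by positivity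
          calc h ^ m * (M * b ^ m) * (Real.sqrt (2 * π) * ((N:ℝ) + 1) ^ ((3 : ℝ) / 2))
              ≤ h ^ m * (M * b ^ m) * ((m:ℝ) * (2 ^ m * (exp 1) ^ m)) :=
                mul_le_mul_of_nonneg_left hS_le hA
            _ = M * (2 ^ m * h ^ m * b ^ m * (exp 1) ^ m) * m := by ring
  -- tail
  have hpart : (∑ n ∈ Finset.Icc 1 N, f n) = ∑ n ∈ Finset.range (N + 1), f n := by
    apply Finset.sum_subset
    · intro x hx
      rw [Finset.mem_Icc] at hx; rw [Finset.mem_range]; omega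
    · intro x hxt hxs
      rw [Finset.mem_range] at hxt; rw [Finset.mem_Icc] at hxs
      have : x = 0 := by omega
      rw [this, hf0]
  have htail := Summable.sum_add_tsum_nat_add (N+1) hsumf
  rw [hrepr, hpart]
  have e3 : -(1/h) * (∑' n, f n) - (-(1/h) * ∑ n ∈ Finset.range (N+1), f n)
      = -(1/h) * (∑' i, f (i + (N+1))) := by
    rw [← htail]; ring
  rw [e3]
  rw [abs_mul, abs_neg, abs_of_pos (by positivity : (0:ℝ) < 1/h)]
  have hshift_abs : Summable (fun i => |f (i + (N+1))|) :=
    (summable_nat_add_iff (N+1)).2 hsumfabs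
  have hgeom : Summable (fun i : ℕ => C * r ^ (i + (N+1))) := by
    have he : (fun i : ℕ => C * r ^ (i + (N+1))) = fun i => (C * r ^ (N+1)) * r ^ i := by
      funext i; rw [pow_add]; ring
    rw [he]
    exact (summable_geometric_of_lt_one hr0.le hr1).mul_left _
  have h1 : |∑' i, f (i + (N+1))| ≤ ∑' i, |f (i + (N+1))| := by
    have hn : Summable (fun i => ‖f (i + (N+1))‖) := by
      simpa [Real.norm_eq_abs] using hshift_abs
    simpa [Real.norm_eq_abs] using norm_tsum_le_tsum_norm hn
  have h2 : ∑' i, |f (i + (N+1))| ≤ ∑' i : ℕ, C * r ^ (i + (N+1)) :=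
    Summable.tsum_le_tsum (fun i => hkey (i + (N+1)) (by omega)) hshift_abs hgeom
  have h3 : ∑' i : ℕ, C * r ^ (i + (N+1)) = C * (r ^ (N+1) / (1 - r)) := by
    have he : (fun i : ℕ => C * r ^ (i + (N+1))) = fun i => (C * r ^ (N+1)) * r ^ i := by
      funext i; rw [pow_add]; ring
    rw [he, tsum_mul_left, tsum_geometric_of_lt_one hr0.le hr1, div_eq_mul_inv]; ring
  calc (1/h) * |∑' i, f (i + (N+1))| ≤ (1/h) * (C * (r ^ (N+1) / (1-r))) := by
        apply mul_le_mul_of_nonneg_left _ (by positivity)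
        rw [← h3]; exact le_trans h1 h2
    _ = (1/h) * C * (r ^ (N+1) / (1-r)) := by ring
end

section
/- Let h > 0, x > 0 and θ ∈ ℝ. Then the series −(1/h) · ∑_{n=1}^{∞} (1/n) · ∑_{k=0}^{n} (−1)^k · C(n,k) · (θ + k·h) · e^{−(θ + k·h)·x} converges and its sum equals (1 − θ·x) · e^{−θ·x}, which is the partial derivative with respect to θ of the function φ(θ, x) = θ · e^{−θ·x}. -/
/-!
Write `r = e^{-hx}`, so that `φ(θ + kh, x) = e^{-θx} (θ + kh) r^k`. The binomial theorem and
`k C(n,k) = n C(n-1,k-1)` turn the `n`-th finite difference into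
`e^{-θx} (θ (1-r)^n - n h r (1-r)^(n-1))`. Dividing by `n` leaves the logarithmic series in
`1 - r`, which sums to `-log r = hx`, and a geometric series in `1 - r`, which sums to `1/r`.
-/

open Real Finset

section Binomial

variable {R : Type*} [CommRing R]

theorem sum_range_neg_one_pow_mul_choose_mul_pow (r : R) (n : ℕ) :
    ∑ k ∈ range (n + 1), (-1) ^ k * (n.choose k : R) * r ^ k = (1 - r) ^ n := by
  rw [sub_eq_neg_add, add_pow]
  refine sum_congr rfl fun k _ => ?_
  rw [neg_pow]
  ring

theorem sum_range_neg_one_pow_mul_cast_mul_choose_mul_pow (r : R) (n : ℕ) :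
    ∑ k ∈ range (n + 1), (-1) ^ k * (k : R) * (n.choose k : R) * r ^ k =
      -((n : R) * r * (1 - r) ^ (n - 1)) := by
  cases n with
  | zero => simp
  | succ n =>
    have hchoose (k : ℕ) : ((k + 1 : ℕ) : R) * ((n + 1).choose (k + 1) : R) =
        ((n + 1 : ℕ) : R) * (n.choose k : R) := by
      rw [mul_comm, ← Nat.cast_mul, ← Nat.cast_mul, ← Nat.add_one_mul_choose_eq]
    rw [sum_range_succ', Nat.add_sub_cancel, ← sum_range_neg_one_pow_mul_choose_mul_pow,
      mul_sum, ← sum_neg_distrib]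
    simp only [Nat.cast_zero, mul_zero, zero_mul, add_zero]
    refine sum_congr rfl fun k _ => ?_
    linear_combination (-(-1 : R) ^ k * r ^ (k + 1)) * hchoose k

theorem sum_range_neg_one_pow_mul_choose_mul_affine_mul_pow (a b r : R) (n : ℕ) :
    ∑ k ∈ range (n + 1), (-1) ^ k * (n.choose k : R) * ((a + k * b) * r ^ k) =
      a * (1 - r) ^ n - n * b * r * (1 - r) ^ (n - 1) := by
  have hsplit : ∀ k ∈ range (n + 1), (-1) ^ k * (n.choose k : R) * ((a + k * b) * r ^ k) =
      a * ((-1) ^ k * (n.choose k : R) * r ^ k) + b * ((-1) ^ k * (k : R) * n.choose k * r ^ k) :=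
    fun k _ => by ring
  rw [sum_congr rfl hsplit, sum_add_distrib, ← mul_sum, ← mul_sum,
    sum_range_neg_one_pow_mul_choose_mul_pow, sum_range_neg_one_pow_mul_cast_mul_choose_mul_pow]
  ring

end Binomial

theorem hasSum_one_div_mul_affine_log_series (a b r : ℝ) (hr₀ : 0 < r) (hr₂ : r < 2) :
    HasSum (fun n : ℕ => (1 / n : ℝ) * (a * (1 - r) ^ n - n * b * r * (1 - r) ^ (n - 1)))
      (-(a * log r) - b) := by
  have hq : |1 - r| < 1 := abs_sub_lt_iff.2 ⟨by linarith, by linarith⟩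
  have hlog := (hasSum_pow_div_log_of_abs_lt_one hq).mul_left a
  have hgeom := (hasSum_geometric_of_abs_lt_one hq).mul_left (b * r)
  rw [sub_sub_cancel] at hlog hgeom
  rw [← hasSum_nat_add_iff' 1]
  convert hlog.sub hgeom using 1
  · funext n
    have hn : (n : ℝ) + 1 ≠ 0 := by positivity
    simp only [Nat.cast_add, Nat.cast_one, Nat.add_sub_cancel]
    field_simp
  · simp [hr₀.ne']

theorem hasDerivAt_mul_exp_neg_mul (x θ : ℝ) :
    HasDerivAt (fun t : ℝ => t * exp (-t * x)) ((1 - θ * x) * exp (-θ * x)) θ :=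
  ((hasDerivAt_id' θ).mul ((hasDerivAt_neg θ).mul_const x).exp).congr_deriv (by ring)

open Real in
/-- Example 1 of the paper, eq. (10): for `h, x > 0` the
logarithmic series for `φ(θ, x) = θ e^{-θx}` converges and sums to
`(1 - θx) e^{-θx} = ∂φ/∂θ`.  (The `n = 0` term is `0` since `1/0 = 0` in `ℝ`.) -/
theorem blend_example_exponential_log_series
    (h x θ : ℝ) (hh : 0 < h) (hx : 0 < x) :
    Summable (fun n : ℕ =>
      -(1 / h) * ((1 / n : ℝ) * ∑ k ∈ Finset.range (n + 1),
        (-1 : ℝ) ^ k * (n.choose k : ℝ) *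
          ((θ + k * h) * exp (-(θ + k * h) * x)))) ∧
    (∑' n : ℕ,
        -(1 / h) * ((1 / n : ℝ) * ∑ k ∈ Finset.range (n + 1),
          (-1 : ℝ) ^ k * (n.choose k : ℝ) *
            ((θ + k * h) * exp (-(θ + k * h) * x)))) =
      (1 - θ * x) * exp (-θ * x) ∧
    HasDerivAt (fun t : ℝ => t * exp (-t * x))
      ((1 - θ * x) * exp (-θ * x)) θ := by
  set r := exp (-(h * x))
  have hr₂ : r < 2 := (exp_lt_one_iff.2 (by nlinarith)).trans one_lt_two
  have hexp (k : ℕ) : exp (-(θ + k * h) * x) = exp (-θ * x) * r ^ k := by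
    rw [← exp_nat_mul, ← exp_add]
    congr 1
    ring
  have hdiff (n : ℕ) : ∑ k ∈ range (n + 1), (-1 : ℝ) ^ k * (n.choose k : ℝ) *
      ((θ + k * h) * exp (-(θ + k * h) * x)) =
        exp (-θ * x) * (θ * (1 - r) ^ n - n * h * r * (1 - r) ^ (n - 1)) := by
    rw [← sum_range_neg_one_pow_mul_choose_mul_affine_mul_pow, mul_sum]
    exact sum_congr rfl fun k _ => by rw [hexp]; ring
  have hsum := (hasSum_one_div_mul_affine_log_series θ h r (exp_pos _) hr₂).mul_left
    (-(1 / h) * exp (-θ * x))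
  have hvalue : -(1 / h) * exp (-θ * x) * (-(θ * log r) - h) = (1 - θ * x) * exp (-θ * x) := by
    rw [log_exp]
    field_simp
    ring
  rw [hvalue] at hsum
  refine ⟨(?hsum : HasSum _ ((1 - θ * x) * exp (-θ * x))).summable, (?hsum).tsum_eq,
    hasDerivAt_mul_exp_neg_mul x θ⟩
  exact hsum.congr_fun fun n => by rw [hdiff]; ring
end
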